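/- Let δ > 0, let (N_j)_{j≥1} be a strictly increasing sequence of positive integers, and let E ⊆ 𝕋 satisfy E ⊆ A(N_j, δ) for every j. Then for every nonzero finite complex measure μ on 𝕋 concentrated on E there exist an integer m and a strictly increasing sequence (n_j)_{j≥1} of positive integers (a subsequence of (N_j)) such that m + Ω((n_j)) ⊆ supp(μ̂). -/

import Mathlib

open MeasureTheory Filter Metric Set

noncomputable section

instance : Fact ((0:ℝ) < 2) := ⟨two_pos⟩

/-- The circle `𝕋 = ℝ/2ℤ`. -/
abbrev Circle2 := AddCircle (2 : ℝ)

/-- Integral of `f` against a complex measure, defined via the Jordan decompositions of the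
real and imaginary parts. -/
def cmIntegral (μ : ComplexMeasure Circle2) (f : Circle2 → ℂ) : ℂ :=
  ((∫ x, f x ∂μ.re.toJordanDecomposition.posPart) -
      ∫ x, f x ∂μ.re.toJordanDecomposition.negPart) +
    Complex.I * ((∫ x, f x ∂μ.im.toJordanDecomposition.posPart) -
      ∫ x, f x ∂μ.im.toJordanDecomposition.negPart)

/-- The Fourier coefficient `μ̂(n) = (1/2) ∫_𝕋 e^{iπnx} dμ(x)`; here `fourier n x = exp (iπnx)`
on `AddCircle 2`. -/
def cmFourierCoeff (μ : ComplexMeasure Circle2) (n : ℤ) : ℂ :=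
  (1 / 2 : ℂ) * cmIntegral μ (fun x => fourier n x)

/-- The support of the Fourier transform of `μ`. -/
def fourierSupport (μ : ComplexMeasure Circle2) : Set ℤ := {n | cmFourierCoeff μ n ≠ 0}

/-- A positive measure with the same null sets as the total variation `|μ|`. -/
def cmVariation (μ : ComplexMeasure Circle2) : Measure Circle2 :=
  μ.re.totalVariation + μ.im.totalVariation

/-- `μ` is concentrated on `E`, i.e. `|μ|(𝕋 ∖ E) = 0`. -/
def ConcentratedOn (μ : ComplexMeasure Circle2) (E : Set Circle2) : Prop :=
  cmVariation μ Eᶜ = 0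

/-- `Λ ⊆ ℤ` is a Rajchman set. -/
def IsRajchman (Λ : Set ℤ) : Prop :=
  ∀ μ : ComplexMeasure Circle2,
    Tendsto (cmFourierCoeff μ) (Filter.cofinite ⊓ Filter.principal Λᶜ) (nhds 0) →
    Tendsto (cmFourierCoeff μ) (Filter.cofinite ⊓ Filter.principal Λ) (nhds 0)

/-- `Λ ⊆ ℤ` is a Riesz set. -/
def IsRiesz (Λ : Set ℤ) : Prop :=
  ∀ μ : ComplexMeasure Circle2, fourierSupport μ ⊆ Λ →
    μ ≪ᵥ (volume : Measure Circle2).toENNRealVectorMeasure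

/-- `E ⊆ 𝕋` is a parisian set. -/
def IsParisian (E : Set Circle2) : Prop :=
  ∀ μ : ComplexMeasure Circle2, ConcentratedOn μ E →
    ¬ μ ≪ᵥ (volume : Measure Circle2).toENNRealVectorMeasure →
    ¬ IsRajchman (fourierSupport μ)

/-- `Ω((n_j)) = {∑ ε_j n_j : ε_j ∈ {-1,0,1}, finitely many nonzero}`. -/
def Omega (n : ℕ → ℤ) : Set ℤ :=
  {k | ∃ (F : Finset ℕ) (ε : ℕ → ℤ),
    (∀ j, ε j = -1 ∨ ε j = 0 ∨ ε j = 1) ∧ k = ∑ j ∈ F, ε j * n j}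

/-- The image of `(2/N)ℤ` in `𝕋`. -/
def grid (N : ℕ) : Set Circle2 := Set.range fun k : ℤ => ((2 * k / N : ℝ) : Circle2)

/-- `A(N,δ)`: the points of `𝕋` within distance `1/(2N^{1+δ})` of `(2/N)ℤ`. -/
def nbhdGrid (N : ℕ) (δ : ℝ) : Set Circle2 :=
  {x | Metric.infDist x (grid N) ≤ 1 / (2 * (N : ℝ) ^ ((1 : ℝ) + δ))}

/-- `Ẽ = {x ∈ 𝕋 : sup_j N_j^{1+δ}·dist(x, (2/N_j)ℤ) < ∞}`. -/
def Etilde (N : ℕ → ℕ) (δ : ℝ) : Set Circle2 :=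
  {x | ∃ C : ℝ, ∀ j, (N j : ℝ) ^ ((1 : ℝ) + δ) * Metric.infDist x (grid (N j)) ≤ C}

/-- The total variation norm `‖μ‖` of a complex measure, as the supremum of
`∑ |μ(B i)|` over finite disjoint families of measurable sets. -/
def cmNorm (μ : ComplexMeasure Circle2) : ℝ :=
  sSup {r : ℝ | ∃ (n : ℕ) (B : Fin n → Set Circle2), (∀ i, MeasurableSet (B i)) ∧
    (∀ i j, i ≠ j → Disjoint (B i) (B j)) ∧ r = ∑ i, ‖μ (B i)‖}

/-- Fourier coefficient of a positive measure. -/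
def posFourierCoeff (μ : Measure Circle2) (n : ℤ) : ℂ :=
  (1 / 2 : ℂ) * ∫ x, fourier n x ∂μ

/-! If `μ` lives on `A(N, δ)`, then `e^{iπNx}` differs from `1` by at most
`πN · dist(x, (2/N)ℤ) ≤ (π/2) N^{-δ}` on the support of `μ`, so shifting a frequency by `±N`
moves the Fourier coefficient by at most `(π/4) ‖μ‖ N^{-δ}`. Start from some `μ̂(m) ≠ 0` (a measure
on the circle is determined by its Fourier coefficients) and extract `n_j = N_{φ j}` whose errors
are at most `|μ̂(m)| / 2^{j+2}`: along `m + ∑ ε_j n_j` the coefficient then drifts by less than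
`|μ̂(m)| / 2`, so it never vanishes there. -/

lemma Complex.norm_exp_I_mul_ofReal_sub_one_le (θ : ℝ) :
    ‖Complex.exp (Complex.I * θ) - 1‖ ≤ |θ| := by
  rw [Complex.norm_exp_I_mul_ofReal_sub_one, norm_mul, Real.norm_eq_abs, Real.norm_eq_abs,
    abs_two]
  have := Real.abs_sin_le_abs (x := θ / 2)
  rw [abs_div, abs_two] at this
  linarith

lemma norm_fourier_add_sub_fourier {T : ℝ} (k s : ℤ) (x : AddCircle T) :
    ‖(fourier (k + s) x : ℂ) - fourier k x‖ = ‖(fourier s x : ℂ) - 1‖ := by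
  rw [fourier_add, ← mul_sub_one, norm_mul, fourier_apply (n := k), Circle.norm_coe, one_mul]

section FourierCharacter

variable {T : ℝ} [hT : Fact (0 < T)]

lemma norm_fourier_sub_one_le (n : ℤ) (z : AddCircle T) :
    ‖(fourier n z : ℂ) - 1‖ ≤ 2 * Real.pi * |(n : ℝ)| / T * ‖z‖ := by
  induction z using QuotientAddGroup.induction_on with | H x =>
  set t := x - round (T⁻¹ * x) * T
  have hzt : (x : AddCircle T) = t := by
    rw [AddCircle.coe_sub, ← zsmul_eq_mul, AddCircle.coe_zsmul, AddCircle.coe_period, smul_zero,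
      sub_zero]
  rw [AddCircle.norm_eq, hzt, fourier_coe_apply, show
    2 * Real.pi * Complex.I * n * t / T = Complex.I * ((2 * Real.pi * n / T * t : ℝ) : ℂ) by
      push_cast; ring]
  refine (Complex.norm_exp_I_mul_ofReal_sub_one_le _).trans_eq ?_
  rw [abs_mul, abs_div, abs_mul, abs_of_pos hT.out, abs_of_pos (by positivity : 0 < 2 * Real.pi)]

lemma norm_fourier_sub_fourier_le (n : ℤ) (x y : AddCircle T) :
    ‖(fourier n x : ℂ) - fourier n y‖ ≤ 2 * Real.pi * |(n : ℝ)| / T * dist x y := by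
  have hx : (fourier n x : ℂ) = fourier n (x - y) * fourier n y := by
    rw [fourier_apply, fourier_apply, fourier_apply, ← Circle.coe_mul, ← AddCircle.toCircle_add,
      smul_sub, sub_add_cancel]
  rw [hx, ← sub_one_mul, norm_mul, fourier_apply (x := y), Circle.norm_coe, mul_one, dist_eq_norm]
  exact norm_fourier_sub_one_le n (x - y)

lemma norm_fourier_sub_one_le_mul_infDist {A : Set (AddCircle T)} (hA : A.Nonempty) {n : ℤ}
    (h1 : ∀ y ∈ A, fourier n y = 1) (x : AddCircle T) :
    ‖(fourier n x : ℂ) - 1‖ ≤ 2 * Real.pi * |(n : ℝ)| / T * infDist x A := by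
  have : Nonempty A := hA.to_subtype
  rw [infDist_eq_iInf, Real.mul_iInf_of_nonneg (div_nonneg (by positivity) hT.out.le)]
  refine le_ciInf fun y => ?_
  simpa [h1 y y.2] using norm_fourier_sub_fourier_le n x y

end FourierCharacter

lemma integral_fourier_neg {T : ℝ} (p : Measure (AddCircle T)) (n : ℤ) :
    ∫ x, fourier (-n) x ∂p = starRingEnd ℂ (∫ x, fourier n x ∂p) := by
  simp_rw [fourier_neg]
  exact integral_conj

section FourierUniqueness

variable {T : ℝ} [Fact (0 < T)]

lemma integral_eq_of_forall_integral_fourier_eq {p q : Measure (AddCircle T)}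
    [IsFiniteMeasure p] [IsFiniteMeasure q]
    (h : ∀ n : ℤ, ∫ x, fourier n x ∂p = ∫ x, fourier n x ∂q) (f : C(AddCircle T, ℂ)) :
    ∫ x, f x ∂p = ∫ x, f x ∂q := by
  let L (ν : Measure (AddCircle T)) [IsFiniteMeasure ν] : C(AddCircle T, ℂ) →L[ℂ] ℂ :=
    (L1.integralCLM' ℂ).comp (ContinuousMap.toLp 1 ν ℂ)
  have hL (ν : Measure (AddCircle T)) [IsFiniteMeasure ν] (g : C(AddCircle T, ℂ)) :
      L ν g = ∫ x, g x ∂ν := by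
    simp only [L, ContinuousLinearMap.comp_apply, ← L1.integral_eq', L1.integral_eq_integral]
    exact integral_congr_ae (ContinuousMap.coeFn_toLp ν g)
  have hdense : Dense (Submodule.span ℂ (range (@fourier T)) : Set C(AddCircle T, ℂ)) :=
    Submodule.dense_iff_topologicalClosure_eq_top.mpr span_fourier_closure_eq_top
  have hpq : L p = L q :=
    ContinuousLinearMap.ext_on hdense (by rintro _ ⟨n, rfl⟩; simp only [hL, h n])
  simpa only [hL] using congr($hpq f)

lemma measure_eq_of_forall_integral_fourier_eq {p q : Measure (AddCircle T)}
    [IsFiniteMeasure p] [IsFiniteMeasure q]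
    (h : ∀ n : ℤ, ∫ x, fourier n x ∂p = ∫ x, fourier n x ∂q) : p = q := by
  refine ext_of_forall_integral_eq_of_IsFiniteMeasure fun f => ?_
  have := integral_eq_of_forall_integral_fourier_eq h ⟨fun x => (f x : ℂ), by fun_prop⟩
  simp only [ContinuousMap.coe_mk] at this
  exact_mod_cast this

lemma MeasureTheory.SignedMeasure.eq_zero_of_forall_integral_fourier_eq
    (s : SignedMeasure (AddCircle T))
    (h : ∀ n : ℤ, ∫ x, fourier n x ∂s.toJordanDecomposition.posPart =
      ∫ x, fourier n x ∂s.toJordanDecomposition.negPart) : s = 0 := by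
  rw [← s.toSignedMeasure_toJordanDecomposition, JordanDecomposition.toSignedMeasure]
  simp only [measure_eq_of_forall_integral_fourier_eq h, sub_self]

end FourierUniqueness

lemma Complex.eq_zero_of_add_I_mul_eq_zero_of_conj {a b : ℤ → ℂ}
    (ha : ∀ n, a (-n) = starRingEnd ℂ (a n)) (hb : ∀ n, b (-n) = starRingEnd ℂ (b n))
    (h : ∀ n, a n + Complex.I * b n = 0) (n : ℤ) : a n = 0 ∧ b n = 0 := by
  have h' : a n - Complex.I * b n = 0 := by
    simpa [ha, hb, sub_eq_add_neg] using congr(starRingEnd ℂ $(h (-n)))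
  have hb0 : Complex.I * b n = 0 := by linear_combination (h n - h') / 2
  exact ⟨by linear_combination (h n + h') / 2, by simpa using hb0⟩

lemma eq_zero_of_forall_cmFourierCoeff_eq_zero {μ : ComplexMeasure Circle2}
    (h : ∀ n, cmFourierCoeff μ n = 0) : μ = 0 := by
  set a : SignedMeasure Circle2 → ℤ → ℂ := fun s n =>
    (∫ x, fourier n x ∂s.toJordanDecomposition.posPart) -
      ∫ x, fourier n x ∂s.toJordanDecomposition.negPart
  have ha (s : SignedMeasure Circle2) (n : ℤ) : a s (-n) = starRingEnd ℂ (a s n) := by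
    simp only [a, integral_fourier_neg, map_sub]
  have hsum (n : ℤ) : a μ.re n + Complex.I * a μ.im n = 0 := by
    have hn := h n
    rw [cmFourierCoeff, mul_eq_zero] at hn
    exact hn.resolve_left (by norm_num)
  have hzero := Complex.eq_zero_of_add_I_mul_eq_zero_of_conj (ha _) (ha _) hsum
  have hre := SignedMeasure.eq_zero_of_forall_integral_fourier_eq μ.re fun n =>
    sub_eq_zero.mp (hzero n).1
  have him := SignedMeasure.eq_zero_of_forall_integral_fourier_eq μ.im fun n =>
    sub_eq_zero.mp (hzero n).2
  exact ComplexMeasure.equivSignedMeasure.injective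
    (Prod.ext (hre.trans (map_zero _).symm) (him.trans (map_zero _).symm))

lemma grid_nonempty (N : ℕ) : (grid N).Nonempty := ⟨_, 0, rfl⟩

lemma fourier_eq_one_of_mem_grid {N : ℕ} {s : ℤ} (hs : (N : ℤ) ∣ s) {y : Circle2}
    (hy : y ∈ grid N) : fourier s y = 1 := by
  obtain ⟨j, rfl⟩ := hs
  obtain ⟨k, rfl⟩ := hy
  rcases Nat.eq_zero_or_pos N with rfl | hN
  · simp
  have hN' : (N : ℂ) ≠ 0 := by exact_mod_cast hN.ne'
  rw [fourier_coe_apply]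
  convert Complex.exp_int_mul_two_pi_mul_I (j * k) using 2
  push_cast
  field_simp

lemma norm_fourier_sub_one_le_of_mem_nbhdGrid {N : ℕ} {δ : ℝ} {s : ℤ} (hs : (N : ℤ) ∣ s)
    {x : Circle2} (hx : x ∈ nbhdGrid N δ) :
    ‖(fourier s x : ℂ) - 1‖ ≤ Real.pi * |(s : ℝ)| / (2 * (N : ℝ) ^ ((1 : ℝ) + δ)) :=
  calc ‖(fourier s x : ℂ) - 1‖ ≤ 2 * Real.pi * |(s : ℝ)| / 2 * infDist x (grid N) :=
        norm_fourier_sub_one_le_mul_infDist (grid_nonempty N)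
          (fun _ hy => fourier_eq_one_of_mem_grid hs hy) x
    _ ≤ 2 * Real.pi * |(s : ℝ)| / 2 * (1 / (2 * (N : ℝ) ^ ((1 : ℝ) + δ))) := by gcongr; exact hx
    _ = _ := by ring

lemma norm_integral_sub_integral_le {α E : Type*} [MeasurableSpace α] [NormedAddCommGroup E]
    [NormedSpace ℝ E] {p q : Measure α} [IsFiniteMeasure p] [IsFiniteMeasure q] {g : α → E}
    {C : ℝ} (hg : ∀ᵐ x ∂(p + q), ‖g x‖ ≤ C) :
    ‖∫ x, g x ∂p - ∫ x, g x ∂q‖ ≤ C * (p + q).real univ := by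
  rw [ae_add_measure_iff] at hg
  rw [measureReal_add_apply, mul_add]
  exact (norm_sub_le _ _).trans
    (add_le_add (norm_integral_le_of_norm_le_const hg.1) (norm_integral_le_of_norm_le_const hg.2))

lemma norm_cmIntegral_le {μ : ComplexMeasure Circle2} {g : Circle2 → ℂ} {C : ℝ}
    (hg : ∀ᵐ x ∂cmVariation μ, ‖g x‖ ≤ C) :
    ‖cmIntegral μ g‖ ≤ C * (cmVariation μ).real univ := by
  rw [cmVariation, ae_add_measure_iff] at hg
  rw [cmVariation, measureReal_add_apply, mul_add]
  refine (norm_add_le _ _).trans (add_le_add (norm_integral_sub_integral_le hg.1) ?_)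
  rw [norm_mul, Complex.norm_I, one_mul]
  exact norm_integral_sub_integral_le hg.2

lemma cmIntegral_sub (μ : ComplexMeasure Circle2) {f g : Circle2 → ℂ} (hf : Continuous f)
    (hg : Continuous g) :
    cmIntegral μ (fun x => f x - g x) = cmIntegral μ f - cmIntegral μ g := by
  have hint (p : Measure Circle2) [IsFiniteMeasure p] {h : Circle2 → ℂ} (hh : Continuous h) :
      Integrable h p :=
    hh.integrable_of_hasCompactSupport (.of_compactSpace h)
  simp only [cmIntegral, integral_sub (hint _ hf) (hint _ hg)]
  ring

lemma norm_cmFourierCoeff_add_sub_le {μ : ComplexMeasure Circle2} {E : Set Circle2}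
    (hconc : ConcentratedOn μ E) {s : ℤ} {C : ℝ} (hC : ∀ x ∈ E, ‖(fourier s x : ℂ) - 1‖ ≤ C)
    (k : ℤ) :
    ‖cmFourierCoeff μ (k + s) - cmFourierCoeff μ k‖ ≤ C * (cmVariation μ).real univ / 2 := by
  have hE : ∀ᵐ x ∂cmVariation μ, x ∈ E := mem_ae_iff.mpr hconc
  have hbound := norm_cmIntegral_le (C := C)
    (hE.mono fun x hx => (norm_fourier_add_sub_fourier k s x).trans_le (hC x hx))
  rw [cmFourierCoeff, cmFourierCoeff, ← mul_sub,
    ← cmIntegral_sub μ (map_continuous _) (map_continuous _), norm_mul,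
    show ‖(1 / 2 : ℂ)‖ = 1 / 2 by norm_num]
  linarith

lemma norm_cmFourierCoeff_add_mul_sub_le {μ : ComplexMeasure Circle2} {E : Set Circle2}
    (hconc : ConcentratedOn μ E) {N : ℕ} (hN : 0 < N) {δ : ℝ} (hE : E ⊆ nbhdGrid N δ) {e : ℤ}
    (he : |e| ≤ 1) (k : ℤ) :
    ‖cmFourierCoeff μ (k + e * N) - cmFourierCoeff μ k‖
      ≤ Real.pi / 4 * (cmVariation μ).real univ * (N : ℝ) ^ (-δ) := by
  refine (norm_cmFourierCoeff_add_sub_le hconc (fun x hx =>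
    norm_fourier_sub_one_le_of_mem_nbhdGrid (dvd_mul_left _ _) (hE hx)) k).trans ?_
  have hN' : (0 : ℝ) < N := by exact_mod_cast hN
  have hs : |((e * N : ℤ) : ℝ)| ≤ N := by
    rw [Int.cast_mul, abs_mul, Int.cast_natCast, abs_of_pos hN']
    exact mul_le_of_le_one_left hN'.le (by exact_mod_cast he)
  have hM : 0 ≤ (cmVariation μ).real univ := measureReal_nonneg
  calc Real.pi * |((e * N : ℤ) : ℝ)| / (2 * (N : ℝ) ^ ((1 : ℝ) + δ)) * (cmVariation μ).real univ / 2
      ≤ Real.pi * N / (2 * (N : ℝ) ^ ((1 : ℝ) + δ)) * (cmVariation μ).real univ / 2 := by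
        gcongr
    _ = Real.pi / 4 * (cmVariation μ).real univ * (N : ℝ) ^ (-δ) := by
        rw [Real.rpow_add hN', Real.rpow_one, Real.rpow_neg hN'.le]
        field_simp
        ring

lemma norm_apply_add_sum_sub_le {ι G F : Type*} [AddCommGroup G] [SeminormedAddCommGroup F]
    {f : G → F} {v : ι → G} {a : ι → ℝ} (h : ∀ i k, ‖f (k + v i) - f k‖ ≤ a i) (s : Finset ι)
    (m : G) : ‖f (m + ∑ i ∈ s, v i) - f m‖ ≤ ∑ i ∈ s, a i := by
  classical
  induction s using Finset.induction_on with
  | empty => simp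
  | insert j s hj ih =>
    rw [Finset.sum_insert hj, Finset.sum_insert hj, add_comm (v j), ← add_assoc]
    calc ‖f (m + ∑ i ∈ s, v i + v j) - f m‖
        ≤ ‖f (m + ∑ i ∈ s, v i + v j) - f (m + ∑ i ∈ s, v i)‖ + ‖f (m + ∑ i ∈ s, v i) - f m‖ :=
          norm_sub_le_norm_sub_add_norm_sub _ _ _
      _ ≤ a j + ∑ i ∈ s, a i := add_le_add (h j _) ih

lemma apply_add_sum_ne_zero {ι G F : Type*} [AddCommGroup G] [SeminormedAddCommGroup F]
    {f : G → F} {v : ι → G} {a : ι → ℝ} (h : ∀ i k, ‖f (k + v i) - f k‖ ≤ a i) (ha : Summable a)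
    {m : G} (hlt : ∑' i, a i < ‖f m‖) (s : Finset ι) : f (m + ∑ i ∈ s, v i) ≠ 0 := by
  intro h0
  have hsum := norm_apply_add_sum_sub_le h s m
  rw [h0, zero_sub, norm_neg] at hsum
  have := ha.sum_le_tsum s fun i _ => (norm_nonneg _).trans (h i 0)
  linarith

theorem exists_shift_omega_subset_fourierSupport_general (δ : ℝ) (hδ : 0 < δ) (N : ℕ → ℕ)
    (hmono : StrictMono N) (E : Set Circle2)
    (hsub : ∀ j, E ⊆ nbhdGrid (N j) δ) (μ : ComplexMeasure Circle2)
    (hconc : ConcentratedOn μ E) (hne : μ ≠ 0) :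
    ∃ (m : ℤ) (n : ℕ → ℤ), StrictMono n ∧ (∀ j, 0 < n j) ∧
      (∃ φ : ℕ → ℕ, StrictMono φ ∧ ∀ j, n j = N (φ j)) ∧
      (fun k => m + k) '' Omega n ⊆ fourierSupport μ := by
  obtain ⟨m, hm⟩ : ∃ m, cmFourierCoeff μ m ≠ 0 :=
    not_forall.mp (mt eq_zero_of_forall_cmFourierCoeff_eq_zero hne)
  set c := ‖cmFourierCoeff μ m‖
  have hc : 0 < c := norm_pos_iff.mpr hm
  set B : ℕ → ℝ := fun i => Real.pi / 4 * (cmVariation μ).real univ * (N i : ℝ) ^ (-δ)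
  have hB : Tendsto B atTop (nhds 0) := by
    simpa using ((tendsto_rpow_neg_atTop hδ).comp
      (tendsto_natCast_atTop_atTop.comp hmono.tendsto_atTop)).const_mul
        (Real.pi / 4 * (cmVariation μ).real univ)
  have hev (j : ℕ) : ∀ᶠ i in atTop, 0 < N i ∧ B i ≤ c / 2 / 2 / 2 ^ j :=
    (hmono.tendsto_atTop.eventually_gt_atTop 0).and
      (hB.eventually (ge_mem_nhds (by positivity)))
  obtain ⟨φ, hφ, hφN⟩ := extraction_forall_of_eventually hev
  refine ⟨m, fun j => N (φ j), fun i j hij => Nat.cast_lt.mpr (hmono (hφ hij)),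
    fun j => Int.natCast_pos.mpr (hφN j).1, ⟨φ, hφ, fun j => rfl⟩, ?_⟩
  rintro _ ⟨_, ⟨F, ε, hε, rfl⟩, rfl⟩
  refine apply_add_sum_ne_zero (fun j k => ?_) (summable_geometric_two' (c / 2)) ?_ F
  · have hεj : |ε j| ≤ 1 := by rcases hε j with h | h | h <;> simp [h]
    exact (norm_cmFourierCoeff_add_mul_sub_le hconc (hφN j).1 (hsub _) hεj k).trans (hφN j).2
  · rw [tsum_geometric_two']
    linarith

/-- If `E ⊆ A(N_j, δ)` for all `j`, then for every nonzero complex measure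
concentrated on `E` there are `m` and a strictly increasing sequence of positive
integers `(n_j)` (a subsequence of `(N_j)`) with `m + Ω((n_j)) ⊆ supp(μ̂)`. -/
theorem exists_shift_omega_subset_fourierSupport (δ : ℝ) (hδ : 0 < δ) (N : ℕ → ℕ)
    (hmono : StrictMono N) (hpos : ∀ j, 0 < N j) (E : Set Circle2)
    (hsub : ∀ j, E ⊆ nbhdGrid (N j) δ) (μ : ComplexMeasure Circle2)
    (hconc : ConcentratedOn μ E) (hne : μ ≠ 0) :
    ∃ (m : ℤ) (n : ℕ → ℤ), StrictMono n ∧ (∀ j, 0 < n j) ∧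
      (∃ φ : ℕ → ℕ, StrictMono φ ∧ ∀ j, n j = N (φ j)) ∧
      (fun k => m + k) '' Omega n ⊆ fourierSupport μ :=
  exists_shift_omega_subset_fourierSupport_general δ hδ N hmono E hsub μ hconc hne
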